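/- arXiv:2308.16130 — 5 statements merged into one kernel-verified Lean document; each statement's English description precedes it below -/
import Mathlib

section
/- The squared norm of the x-derivative of the steering vector satisfies ‖ȧ_x‖² = (D₁ˣ + ν²·D₂ˣ)/(4ν²), and by symmetry ‖ȧ_y‖² = ‖ȧ_x‖². (Part of Proposition 4.) -/
open Finset Filter

noncomputable section

/-- Distance from antenna `(i,k)` (located at `(i·s, k·s, 0)`) to the boresight
target at `(0,0,d)`. -/
def rUPA (d s : ℝ) (i k : ℤ) : ℝ :=
  Real.sqrt (d ^ 2 + (i : ℝ) ^ 2 * s ^ 2 + (k : ℝ) ^ 2 * s ^ 2)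

/-- Near-field steering vector entry `a_{ik} = (1/(2ν r_{ik}))·exp(−𝕛 ν r_{ik})`. -/
def steer (d s ν : ℝ) (i k : ℤ) : ℂ :=
  ((1 / (2 * ν * rUPA d s i k) : ℝ) : ℂ) *
    Complex.exp (-Complex.I * (ν : ℂ) * ((rUPA d s i k : ℝ) : ℂ))

/-- Entry of the x-derivative `ȧ_x` of the steering vector. -/
def dax (d s ν : ℝ) (i k : ℤ) : ℂ :=
  steer d s ν i k * (((i : ℝ) * s : ℝ) : ℂ) *
    (((1 / rUPA d s i k ^ 2 : ℝ) : ℂ) + Complex.I * ((ν / rUPA d s i k : ℝ) : ℂ))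

/-- Entry of the y-derivative `ȧ_y` of the steering vector. -/
def day (d s ν : ℝ) (i k : ℤ) : ℂ :=
  steer d s ν i k * (((k : ℝ) * s : ℝ) : ℂ) *
    (((1 / rUPA d s i k ^ 2 : ℝ) : ℂ) + Complex.I * ((ν / rUPA d s i k : ℝ) : ℂ))

/-- Entry of the z-derivative `ȧ_z` of the steering vector. -/
def daz (d s ν : ℝ) (i k : ℤ) : ℂ :=
  -steer d s ν i k * ((d : ℝ) : ℂ) *
    (((1 / rUPA d s i k ^ 2 : ℝ) : ℂ) + Complex.I * ((ν / rUPA d s i k : ℝ) : ℂ))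

lemma my_sum_even_Icc (m : ℕ) (f : ℤ → ℝ) (hf : ∀ i, f (-i) = f i) :
    ∑ i ∈ Icc (-(m : ℤ)) m, f i = f 0 + 2 * ∑ i ∈ Finset.Icc 1 m, f (i : ℤ) := by
  induction m with
  | zero => simp
  | succ n ih =>
    have h1 : Icc (-((n+1 : ℕ) : ℤ)) ((n+1 : ℕ) : ℤ)
        = insert (-((n:ℤ)+1)) (insert ((n:ℤ)+1) (Icc (-(n:ℤ)) n)) := by
      ext x; simp; omega
    have h2 : Finset.Icc 1 (n+1) = insert (n+1) (Finset.Icc 1 n) := by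
      ext x; simp; omega
    rw [h1, Finset.sum_insert (by simp; try omega), Finset.sum_insert (by simp; try omega),
      ih, h2, Finset.sum_insert (by simp; try omega)]
    have := hf ((n:ℤ)+1)
    push_cast
    linarith

lemma my_double_decomp (m : ℕ) (g : ℤ → ℤ → ℝ) (hx : ∀ i k, g (-i) k = g i k)
    (hy : ∀ i k, g i (-k) = g i k) (h0 : ∀ k, g 0 k = 0) :
    ∑ i ∈ Icc (-(m : ℤ)) m, ∑ k ∈ Icc (-(m : ℤ)) m, g i k
      = 2 * ∑ i ∈ Finset.Icc 1 m, g (i : ℤ) 0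
        + 4 * ∑ i ∈ Finset.Icc 1 m, ∑ k ∈ Finset.Icc 1 m, g (i : ℤ) (k : ℤ) := by
  rw [my_sum_even_Icc m _ (fun i => Finset.sum_congr rfl fun k _ => hx i k)]
  rw [Finset.sum_eq_zero (fun k _ => h0 k), zero_add]
  rw [Finset.sum_congr rfl
    (fun (i : ℕ) _ => my_sum_even_Icc m (g (i : ℤ)) (hy (i : ℤ)))]
  rw [Finset.sum_add_distrib, ← Finset.mul_sum]
  ring

lemma rUPA_pos (d s : ℝ) (hd : 0 < d) (i k : ℤ) : 0 < rUPA d s i k := by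
  apply Real.sqrt_pos.mpr
  nlinarith [sq_nonneg ((i:ℝ)*s), sq_nonneg ((k:ℝ)*s), sq_nonneg d]

lemma rUPA_sq (d s : ℝ) (i k : ℤ) :
    rUPA d s i k ^ 2 = d ^ 2 + (i : ℝ) ^ 2 * s ^ 2 + (k : ℝ) ^ 2 * s ^ 2 := by
  apply Real.sq_sqrt
  nlinarith [sq_nonneg d, sq_nonneg ((i:ℝ)*s), sq_nonneg ((k:ℝ)*s)]

lemma rUPA_symm (d s : ℝ) (i k : ℤ) : rUPA d s i k = rUPA d s k i := by
  unfold rUPA; ring_nf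

lemma rUPA_neg_left (d s : ℝ) (i k : ℤ) : rUPA d s (-i) k = rUPA d s i k := by
  unfold rUPA; push_cast; ring_nf

lemma rUPA_neg_right (d s : ℝ) (i k : ℤ) : rUPA d s i (-k) = rUPA d s i k := by
  unfold rUPA; push_cast; ring_nf

lemma normSq_dax (d s ν : ℝ) (hd : 0 < d) (hν : 0 < ν) (i k : ℤ) :
    Complex.normSq (dax d s ν i k) =
      ((i : ℝ) ^ 2 * s ^ 2 / (d ^ 2 + (i : ℝ) ^ 2 * s ^ 2 + (k : ℝ) ^ 2 * s ^ 2) ^ 3 +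
        ν ^ 2 * ((i : ℝ) ^ 2 * s ^ 2 /
          (d ^ 2 + (i : ℝ) ^ 2 * s ^ 2 + (k : ℝ) ^ 2 * s ^ 2) ^ 2)) / (4 * ν ^ 2) := by
  set r := rUPA d s i k with hr
  have hrpos : 0 < r := rUPA_pos d s hd i k
  have hR : r ^ 2 = d ^ 2 + (i : ℝ) ^ 2 * s ^ 2 + (k : ℝ) ^ 2 * s ^ 2 := rUPA_sq d s i k
  have he : Complex.normSq (Complex.exp (-Complex.I * (ν : ℂ) * (r : ℂ))) = 1 := by
    rw [Complex.normSq_eq_norm_sq, Complex.norm_exp]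
    simp
  rw [dax, steer]
  rw [map_mul, map_mul, map_mul, he, mul_one]
  have h2 : Complex.normSq (((1 / r ^ 2 : ℝ) : ℂ) + Complex.I * ((ν / r : ℝ) : ℂ))
      = (1 / r ^ 2) ^ 2 + (ν / r) ^ 2 := by
    rw [mul_comm Complex.I]
    exact Complex.normSq_add_mul_I _ _
  rw [h2, Complex.normSq_ofReal, Complex.normSq_ofReal]
  rw [← hR]
  rw [← hr]
  field_simp
  ring

/-- Squared norm of the x-derivative of the steering vector:
`‖ȧ_x‖² = (D₁ˣ + ν²·D₂ˣ)/(4ν²)`, and by symmetry `‖ȧ_y‖² = ‖ȧ_x‖²`. -/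
theorem dax_normSq_formula (m : ℕ) (s d ν : ℝ) (hs : 0 < s) (hd : 0 < d) (hν : 0 < ν) :
    (∑ i ∈ Icc (-(m : ℤ)) m, ∑ k ∈ Icc (-(m : ℤ)) m, Complex.normSq (dax d s ν i k)) =
      ((4 * ∑ i ∈ Finset.Icc 1 m, ∑ k ∈ Finset.Icc 1 m,
          (k : ℝ) ^ 2 * s ^ 2 / (d ^ 2 + ((i : ℝ) ^ 2 + (k : ℝ) ^ 2) * s ^ 2) ^ 3 +
        2 * ∑ k ∈ Finset.Icc 1 m,
          (k : ℝ) ^ 2 * s ^ 2 / (d ^ 2 + (k : ℝ) ^ 2 * s ^ 2) ^ 3) +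
       ν ^ 2 * (4 * ∑ i ∈ Finset.Icc 1 m, ∑ k ∈ Finset.Icc 1 m,
          (k : ℝ) ^ 2 * s ^ 2 / (d ^ 2 + ((i : ℝ) ^ 2 + (k : ℝ) ^ 2) * s ^ 2) ^ 2 +
        2 * ∑ k ∈ Finset.Icc 1 m,
          (k : ℝ) ^ 2 * s ^ 2 / (d ^ 2 + (k : ℝ) ^ 2 * s ^ 2) ^ 2)) / (4 * ν ^ 2) ∧
    (∑ i ∈ Icc (-(m : ℤ)) m, ∑ k ∈ Icc (-(m : ℤ)) m, Complex.normSq (day d s ν i k)) =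
      (∑ i ∈ Icc (-(m : ℤ)) m, ∑ k ∈ Icc (-(m : ℤ)) m, Complex.normSq (dax d s ν i k)) := by
  constructor
  · -- symmetry hypotheses for the double decomposition
    have hx : ∀ i k : ℤ, Complex.normSq (dax d s ν (-i) k) = Complex.normSq (dax d s ν i k) := by
      intro i k
      have : dax d s ν (-i) k = -dax d s ν i k := by
        unfold dax steer
        rw [rUPA_neg_left]
        push_cast
        ring
      rw [this, Complex.normSq_neg]
    have hy : ∀ i k : ℤ, Complex.normSq (dax d s ν i (-k)) = Complex.normSq (dax d s ν i k) := by
      intro i k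
      have : dax d s ν i (-k) = dax d s ν i k := by
        unfold dax steer
        rw [rUPA_neg_right]
      rw [this]
    have h0 : ∀ k : ℤ, Complex.normSq (dax d s ν 0 k) = 0 := by
      intro k; simp [dax]
    rw [my_double_decomp m _ hx hy h0]
    -- pointwise values
    have hu : ∀ i : ℕ, i ∈ Finset.Icc 1 m →
        Complex.normSq (dax d s ν (i : ℤ) 0) =
          ((i : ℝ) ^ 2 * s ^ 2 / (d ^ 2 + (i : ℝ) ^ 2 * s ^ 2) ^ 3 +
            ν ^ 2 * ((i : ℝ) ^ 2 * s ^ 2 / (d ^ 2 + (i : ℝ) ^ 2 * s ^ 2) ^ 2)) / (4 * ν ^ 2) := by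
      intro i _
      rw [normSq_dax d s ν hd hν]
      push_cast
      ring_nf
    have hw : ∀ i : ℕ, i ∈ Finset.Icc 1 m →
        (∑ k ∈ Finset.Icc 1 m, Complex.normSq (dax d s ν (i : ℤ) (k : ℤ))) =
          ∑ k ∈ Finset.Icc 1 m,
            ((i : ℝ) ^ 2 * s ^ 2 / (d ^ 2 + ((k : ℝ) ^ 2 + (i : ℝ) ^ 2) * s ^ 2) ^ 3 +
              ν ^ 2 * ((i : ℝ) ^ 2 * s ^ 2 / (d ^ 2 + ((k : ℝ) ^ 2 + (i : ℝ) ^ 2) * s ^ 2) ^ 2))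
              / (4 * ν ^ 2) := by
      intro i _
      refine Finset.sum_congr rfl fun k _ => ?_
      rw [normSq_dax d s ν hd hν]
      push_cast
      ring_nf
    rw [Finset.sum_congr rfl hu, Finset.sum_congr rfl hw]
    -- flatten sums
    simp only [← Finset.sum_div, Finset.sum_add_distrib, ← Finset.mul_sum]
    -- identify the double sums (swap the roles of i and k)
    have hswap3 :
        (∑ i ∈ Finset.Icc 1 m, ∑ k ∈ Finset.Icc 1 m,
            (i : ℝ) ^ 2 * s ^ 2 / (d ^ 2 + ((k : ℝ) ^ 2 + (i : ℝ) ^ 2) * s ^ 2) ^ 3) =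
          ∑ i ∈ Finset.Icc 1 m, ∑ k ∈ Finset.Icc 1 m,
            (k : ℝ) ^ 2 * s ^ 2 / (d ^ 2 + ((i : ℝ) ^ 2 + (k : ℝ) ^ 2) * s ^ 2) ^ 3 := by
      rw [Finset.sum_comm]
    have hswap2 :
        (∑ i ∈ Finset.Icc 1 m, ∑ k ∈ Finset.Icc 1 m,
            (i : ℝ) ^ 2 * s ^ 2 / (d ^ 2 + ((k : ℝ) ^ 2 + (i : ℝ) ^ 2) * s ^ 2) ^ 2) =
          ∑ i ∈ Finset.Icc 1 m, ∑ k ∈ Finset.Icc 1 m,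
            (k : ℝ) ^ 2 * s ^ 2 / (d ^ 2 + ((i : ℝ) ^ 2 + (k : ℝ) ^ 2) * s ^ 2) ^ 2 := by
      rw [Finset.sum_comm]
    rw [hswap3, hswap2]
    have hν2 : (4 : ℝ) * ν ^ 2 ≠ 0 := by positivity
    ring
  · -- day sum equals dax sum by symmetry i ↔ k
    have h : ∀ i k : ℤ, day d s ν i k = dax d s ν k i := by
      intro i k
      unfold day dax steer
      rw [rUPA_symm]
    rw [Finset.sum_comm]
    exact Finset.sum_congr rfl fun i _ => Finset.sum_congr rfl fun k _ => by rw [h]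
end
end

section
/- The inner product of the z-derivative with the steering vector satisfies ȧ_zᴴ a = Σ_{i,k} conj((ȧ_z)_{ik})·a_{ik} = (d/(4ν²))·(−D₂ᶻ + 𝕛·ν·D₃ᶻ), where the sum runs over all (i,k) ∈ {−m,…,m}². (Formula (31) of Proposition 4.) -/
open Finset Filter

noncomputable section

/-- Sum of an even function over a symmetric integer interval. -/
lemma even_sum_aux (m : ℕ) (h : ℤ → ℝ) (he : ∀ i, h (-i) = h i) :
    ∑ i ∈ Icc (-(m:ℤ)) m, h i = h 0 + 2 * ∑ i ∈ Icc (1:ℤ) m, h i := by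
  have hU : Icc (-(m:ℤ)) m = Icc (-(m:ℤ)) (-1) ∪ Icc (0:ℤ) m := by
    ext x; simp; omega
  have hdisj : Disjoint (Icc (-(m:ℤ)) (-1)) (Icc (0:ℤ) m) := by
    rw [Finset.disjoint_left]; intro a ha ha'; simp at ha ha'; omega
  have hneg : ∑ i ∈ Icc (-(m:ℤ)) (-1), h i = ∑ i ∈ Icc (1:ℤ) m, h i := by
    apply Finset.sum_nbij' (fun x => -x) (fun x => -x)
    · intro a ha; simp at ha ⊢; omega
    · intro a ha; simp at ha ⊢; omega
    · intro a _; ring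
    · intro a _; ring
    · intro a _; rw [he]
  have hzero : ∑ i ∈ Icc (0:ℤ) m, h i = h 0 + ∑ i ∈ Icc (1:ℤ) m, h i := by
    have : Icc (0:ℤ) m = insert 0 (Icc (1:ℤ) m) := by ext x; simp; omega
    rw [this, Finset.sum_insert (by simp)]
  rw [hU, Finset.sum_union hdisj, hneg, hzero]; ring

lemma sum_nat_int_aux (a b : ℕ) (G : ℤ → ℝ) :
    ∑ i ∈ Finset.Icc a b, G (i:ℤ) = ∑ i ∈ Finset.Icc (a:ℤ) (b:ℤ), G i := by
  refine Finset.sum_nbij' (fun n : ℕ => (n:ℤ)) (fun z : ℤ => z.toNat) ?_ ?_ ?_ ?_ ?_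
  · intro x hx; simp at hx ⊢; omega
  · intro x hx; simp at hx ⊢; omega
  · intro x hx; simp
  · intro x hx; simp at hx ⊢; omega
  · intro x _; rfl

/-- Quadrant decomposition of a fully symmetric double sum. -/
lemma double_sym_aux (m : ℕ) (f : ℤ → ℤ → ℝ)
    (h1 : ∀ i k, f (-i) k = f i k) (h2 : ∀ i k, f i (-k) = f i k)
    (h3 : ∀ i k, f i k = f k i) :
    ∑ i ∈ Icc (-(m:ℤ)) m, ∑ k ∈ Icc (-(m:ℤ)) m, f i k
      = f 0 0 + 4 * ∑ i ∈ Finset.range (m+1), ∑ k ∈ Finset.Icc 1 m, f (i:ℤ) (k:ℤ) := by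
  have inner : ∀ i : ℤ, ∑ k ∈ Icc (-(m:ℤ)) m, f i k
      = f i 0 + 2 * ∑ k ∈ Icc (1:ℤ) m, f i k := fun i => even_sum_aux m (f i) (h2 i)
  rw [Finset.sum_congr rfl (fun i _ => inner i), Finset.sum_add_distrib,
    even_sum_aux m (fun i => f i 0) (fun i => h1 i 0),
    ← Finset.mul_sum, even_sum_aux m (fun i => ∑ k ∈ Icc (1:ℤ) m, f i k)
      (fun i => Finset.sum_congr rfl (fun k _ => h1 i k))]
  have hrange : (Finset.range (m+1)) = Finset.Icc 0 m := by
    ext x; simp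
  have hsplit : ∑ i ∈ Finset.range (m+1), ∑ k ∈ Finset.Icc 1 m, f (i:ℤ) (k:ℤ)
      = (∑ k ∈ Finset.Icc 1 m, f 0 (k:ℤ))
        + ∑ i ∈ Finset.Icc 1 m, ∑ k ∈ Finset.Icc 1 m, f (i:ℤ) (k:ℤ) := by
    rw [hrange]
    have : Finset.Icc 0 m = insert 0 (Finset.Icc 1 m) := by ext x; simp; omega
    rw [this, Finset.sum_insert (by simp)]
    norm_num
  rw [hsplit]
  have e1 : ∑ k ∈ Finset.Icc 1 m, f 0 (k:ℤ) = ∑ k ∈ Icc (1:ℤ) m, f 0 k :=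
    sum_nat_int_aux 1 m (f 0)
  have e2 : ∑ i ∈ Finset.Icc 1 m, ∑ k ∈ Finset.Icc 1 m, f (i:ℤ) (k:ℤ)
      = ∑ i ∈ Icc (1:ℤ) m, ∑ k ∈ Icc (1:ℤ) m, f i k := by
    rw [sum_nat_int_aux 1 m (fun i => ∑ k ∈ Finset.Icc 1 m, f i (k:ℤ))]
    exact Finset.sum_congr rfl (fun i _ => sum_nat_int_aux 1 m (f i))
  rw [e1, e2]
  have e3 : ∑ i ∈ Icc (1:ℤ) m, f i 0 = ∑ i ∈ Icc (1:ℤ) m, f 0 i :=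
    Finset.sum_congr rfl (fun i _ => h3 i 0)
  rw [e3]; ring

/-- Pointwise value of `conj (ȧ_z)_{ik} · a_{ik}`. -/
lemma term_eq_aux (s d ν : ℝ) (hd : 0 < d) (hν : 0 < ν) (i k : ℤ) :
    (starRingEnd ℂ) (daz d s ν i k) * steer d s ν i k =
      ((d / (4 * ν ^ 2) : ℝ) : ℂ) *
        (-(((1 / (d ^ 2 + ((i : ℝ) ^ 2 + (k : ℝ) ^ 2) * s ^ 2) ^ 2 : ℝ)) : ℂ) +
         Complex.I * (ν : ℂ) *
           (((1 / ((d ^ 2 + ((i : ℝ) ^ 2 + (k : ℝ) ^ 2) * s ^ 2) *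
             Real.sqrt (d ^ 2 + ((i : ℝ) ^ 2 + (k : ℝ) ^ 2) * s ^ 2)) : ℝ)) : ℂ)) := by
  have ht : (0:ℝ) < d ^ 2 + ((i : ℝ) ^ 2 + (k : ℝ) ^ 2) * s ^ 2 := by positivity
  have hr : rUPA d s i k = Real.sqrt (d ^ 2 + ((i : ℝ) ^ 2 + (k : ℝ) ^ 2) * s ^ 2) := by
    rw [rUPA]; ring_nf
  set x : ℝ := Real.sqrt (d ^ 2 + ((i : ℝ) ^ 2 + (k : ℝ) ^ 2) * s ^ 2) with hx_def
  have hx : 0 < x := Real.sqrt_pos.mpr ht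
  have hx2 : x ^ 2 = d ^ 2 + ((i : ℝ) ^ 2 + (k : ℝ) ^ 2) * s ^ 2 := Real.sq_sqrt ht.le
  have hE : (starRingEnd ℂ) (Complex.exp (-Complex.I * (ν : ℂ) * (x : ℂ)))
      * Complex.exp (-Complex.I * (ν : ℂ) * (x : ℂ)) = 1 := by
    rw [← Complex.exp_conj, ← Complex.exp_add]
    have h1 : (starRingEnd ℂ) (-Complex.I * (ν : ℂ) * (x : ℂ))
        = Complex.I * (ν : ℂ) * (x : ℂ) := by
      simp [map_mul, Complex.conj_I, Complex.conj_ofReal]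
    rw [h1, show Complex.I * (ν : ℂ) * (x : ℂ) + -Complex.I * (ν : ℂ) * (x : ℂ) = 0 by ring,
      Complex.exp_zero]
  have factor : (starRingEnd ℂ) (daz d s ν i k) * steer d s ν i k =
      ((starRingEnd ℂ) (Complex.exp (-Complex.I * (ν : ℂ) * (x : ℂ)))
        * Complex.exp (-Complex.I * (ν : ℂ) * (x : ℂ))) *
        (-(((1 / (2 * ν * x) : ℝ) : ℂ)) * ((d:ℝ):ℂ) *
          (((1 / x ^ 2 : ℝ) : ℂ) - Complex.I * ((ν / x : ℝ) : ℂ)) *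
          ((1 / (2 * ν * x) : ℝ) : ℂ)) := by
    rw [daz, steer, hr]
    simp only [map_mul, map_neg, map_add, Complex.conj_ofReal, Complex.conj_I]
    ring
  rw [factor, hE, one_mul, ← hx2]
  have hxC : (x:ℂ) ≠ 0 := by exact_mod_cast hx.ne'
  have hνC : (ν:ℂ) ≠ 0 := by exact_mod_cast hν.ne'
  push_cast
  field_simp [hxC, hνC]
  ring

/-- Formula (31): `ȧ_zᴴ a = (d/(4ν²))·(−D₂ᶻ + 𝕛·ν·D₃ᶻ)`, where
`D₂ᶻ = 1/d⁴ + 4·Σ 1/(d²+(i²+k²)s²)²` and `D₃ᶻ = 1/d³ + 4·Σ 1/(d²+(i²+k²)s²)^{3/2}`. -/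
theorem daz_inner_steer_formula (m : ℕ) (s d ν : ℝ) (hs : 0 < s) (hd : 0 < d) (hν : 0 < ν) :
    (∑ i ∈ Icc (-(m : ℤ)) m, ∑ k ∈ Icc (-(m : ℤ)) m,
        (starRingEnd ℂ) (daz d s ν i k) * steer d s ν i k) =
      ((d / (4 * ν ^ 2) : ℝ) : ℂ) *
        (-(((1 / d ^ 4 + 4 * ∑ i ∈ Finset.range (m + 1), ∑ k ∈ Finset.Icc 1 m,
              1 / (d ^ 2 + ((i : ℝ) ^ 2 + (k : ℝ) ^ 2) * s ^ 2) ^ 2 : ℝ)) : ℂ) +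
         Complex.I * (ν : ℂ) *
           (((1 / d ^ 3 + 4 * ∑ i ∈ Finset.range (m + 1), ∑ k ∈ Finset.Icc 1 m,
              1 / ((d ^ 2 + ((i : ℝ) ^ 2 + (k : ℝ) ^ 2) * s ^ 2) *
                Real.sqrt (d ^ 2 + ((i : ℝ) ^ 2 + (k : ℝ) ^ 2) * s ^ 2)) : ℝ)) : ℂ)) := by
  set F : ℤ → ℤ → ℝ := fun i k => 1 / (d ^ 2 + ((i : ℝ) ^ 2 + (k : ℝ) ^ 2) * s ^ 2) ^ 2
    with hF_def
  set G : ℤ → ℤ → ℝ := fun i k =>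
      1 / ((d ^ 2 + ((i : ℝ) ^ 2 + (k : ℝ) ^ 2) * s ^ 2) *
        Real.sqrt (d ^ 2 + ((i : ℝ) ^ 2 + (k : ℝ) ^ 2) * s ^ 2)) with hG_def
  have EQ2 : ∑ i ∈ Icc (-(m:ℤ)) m, ∑ k ∈ Icc (-(m:ℤ)) m, F i k
      = 1 / d ^ 4 + 4 * ∑ i ∈ Finset.range (m + 1), ∑ k ∈ Finset.Icc 1 m,
          1 / (d ^ 2 + ((i : ℝ) ^ 2 + (k : ℝ) ^ 2) * s ^ 2) ^ 2 := by
    rw [double_sym_aux m F (by intro i k; simp [hF_def]) (by intro i k; simp [hF_def])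
      (by intro i k; simp [hF_def]; ring_nf)]
    congr 1
    simp [hF_def]; ring
  have EQ3 : ∑ i ∈ Icc (-(m:ℤ)) m, ∑ k ∈ Icc (-(m:ℤ)) m, G i k
      = 1 / d ^ 3 + 4 * ∑ i ∈ Finset.range (m + 1), ∑ k ∈ Finset.Icc 1 m,
          1 / ((d ^ 2 + ((i : ℝ) ^ 2 + (k : ℝ) ^ 2) * s ^ 2) *
            Real.sqrt (d ^ 2 + ((i : ℝ) ^ 2 + (k : ℝ) ^ 2) * s ^ 2)) := by
    rw [double_sym_aux m G (by intro i k; simp [hG_def]) (by intro i k; simp [hG_def])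
      (by intro i k; simp [hG_def]; ring_nf)]
    congr 1
    simp [hG_def, Real.sqrt_sq hd.le]; ring
  calc
    (∑ i ∈ Icc (-(m : ℤ)) m, ∑ k ∈ Icc (-(m : ℤ)) m,
        (starRingEnd ℂ) (daz d s ν i k) * steer d s ν i k)
      = ∑ i ∈ Icc (-(m : ℤ)) m, ∑ k ∈ Icc (-(m : ℤ)) m,
          ((d / (4 * ν ^ 2) : ℝ) : ℂ) *
            (-((F i k : ℝ) : ℂ) + Complex.I * (ν : ℂ) * ((G i k : ℝ) : ℂ)) := by
        refine Finset.sum_congr rfl fun i _ => Finset.sum_congr rfl fun k _ => ?_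
        exact term_eq_aux s d ν hd hν i k
    _ = ((d / (4 * ν ^ 2) : ℝ) : ℂ) *
          (-((∑ i ∈ Icc (-(m:ℤ)) m, ∑ k ∈ Icc (-(m:ℤ)) m, F i k : ℝ) : ℂ)
           + Complex.I * (ν : ℂ) *
             ((∑ i ∈ Icc (-(m:ℤ)) m, ∑ k ∈ Icc (-(m:ℤ)) m, G i k : ℝ) : ℂ)) := by
        simp only [← Finset.mul_sum]
        congr 1
        push_cast
        simp only [Finset.sum_add_distrib, Finset.sum_neg_distrib, ← Finset.mul_sum]
    _ = _ := by rw [EQ2, EQ3]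
end
end

section
/- Fix an integer m ≥ 1 and reals s > 0, ν > 0, σ > 0, a nonzero complex number b, and a positive integer L; write n = 2m+1. Let a(d) and ȧ_x(d) be the steering vector and its x-derivative for target distance d, and define CRB_x(d) = (σ²/(4|b|²L))·1/(‖a(d)‖²·‖ȧ_x(d)‖²). Then lim_{d→∞} CRB_x(d)/d⁶ = (48σ²/(|b|²L))·ν²/((n²−1)·n⁴·s²). (Proposition 5, equation (24), asymptotic scaling of the x- and y-coordinate CRB with target distance; the same limit holds with ȧ_y in place of ȧ_x.) -/
open Finset Filter

noncomputable section

section CRBHelpers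

open Finset Filter

lemma crb_sumsq (m : ℕ) : ∑ i ∈ Icc (-(m : ℤ)) m, (i:ℝ)^2 = (m:ℝ)*((m:ℝ)+1)*(2*(m:ℝ)+1)/3 := by
  induction m with
  | zero => simp
  | succ m ih =>
    have hset : Icc (-((m+1:ℕ) : ℤ)) ((m+1:ℕ):ℤ)
        = insert (-((m:ℤ)+1)) (insert ((m:ℤ)+1) (Icc (-(m:ℤ)) m)) := by
      ext x; simp only [mem_Icc, mem_insert]; push_cast; omega
    rw [hset, sum_insert (by simp only [mem_insert, mem_Icc]; omega),
      sum_insert (by simp only [mem_Icc]; omega), ih]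
    push_cast; ring

lemma crb_cardIcc (m : ℕ) : ((Icc (-(m : ℤ)) m).card : ℝ) = 2*(m:ℝ)+1 := by
  have : (m:ℤ) + 1 - (-(m:ℤ)) = ((2*m+1 : ℕ) : ℤ) := by push_cast; ring
  rw [Int.card_Icc, this, Int.toNat_natCast]; push_cast; ring

lemma crb_aux1 (c : ℝ) (hc : 0 ≤ c) :
    Tendsto (fun d : ℝ => d^2/(d^2+c)) atTop (nhds 1) := by
  have h : Tendsto (fun d : ℝ => d^2 + c) atTop atTop :=
    tendsto_atTop_add_const_right _ c (tendsto_pow_atTop two_ne_zero)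
  have h0 : Tendsto (fun d : ℝ => c/(d^2+c)) atTop (nhds 0) :=
    Tendsto.div_atTop tendsto_const_nhds h
  have h1 : Tendsto (fun d : ℝ => 1 - c/(d^2+c)) atTop (nhds 1) := by
    simpa using tendsto_const_nhds.sub h0
  refine h1.congr' ?_
  filter_upwards [eventually_gt_atTop 0] with d hd
  have hne : d^2 + c ≠ 0 := by positivity
  field_simp
  ring

lemma crb_auxinv (c : ℝ) : Tendsto (fun d : ℝ => 1/(d^2+c)) atTop (nhds 0) := by
  have h : Tendsto (fun d : ℝ => d^2 + c) atTop atTop :=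
    tendsto_atTop_add_const_right _ c (tendsto_pow_atTop two_ne_zero)
  exact Tendsto.div_atTop tendsto_const_nhds h

lemma crb_normSq_steer_eq (s ν : ℝ) (hν : 0 < ν) (i k : ℤ) {d : ℝ} (hd : 0 < d) :
    Complex.normSq (steer d s ν i k)
      = 1 / (4*ν^2*(d^2 + (i:ℝ)^2*s^2 + (k:ℝ)^2*s^2)) := by
  have hq : 0 < d ^ 2 + (i : ℝ) ^ 2 * s ^ 2 + (k : ℝ) ^ 2 * s ^ 2 := by positivity
  have hr : rUPA d s i k ^ 2 = d ^ 2 + (i : ℝ) ^ 2 * s ^ 2 + (k : ℝ) ^ 2 * s ^ 2 :=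
    Real.sq_sqrt hq.le
  have hexp : Complex.normSq (Complex.exp (-Complex.I * (ν : ℂ) * ((rUPA d s i k : ℝ) : ℂ))) = 1 := by
    rw [Complex.normSq_eq_norm_sq, Complex.norm_exp]
    simp [Complex.mul_re]
  rw [steer, Complex.normSq_mul, hexp, Complex.normSq_ofReal, mul_one, ← hr]
  ring

lemma crb_normSq_dax_eq (s ν : ℝ) (hν : 0 < ν) (i k : ℤ) {d : ℝ} (hd : 0 < d) :
    Complex.normSq (dax d s ν i k)
      = (1 / (4*ν^2*(d^2 + (i:ℝ)^2*s^2 + (k:ℝ)^2*s^2))) * ((i:ℝ)^2*s^2) *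
        (1/(d^2 + (i:ℝ)^2*s^2 + (k:ℝ)^2*s^2)^2
          + ν^2/(d^2 + (i:ℝ)^2*s^2 + (k:ℝ)^2*s^2)) := by
  have hq : 0 < d ^ 2 + (i : ℝ) ^ 2 * s ^ 2 + (k : ℝ) ^ 2 * s ^ 2 := by positivity
  have hr : rUPA d s i k ^ 2 = d ^ 2 + (i : ℝ) ^ 2 * s ^ 2 + (k : ℝ) ^ 2 * s ^ 2 :=
    Real.sq_sqrt hq.le
  rw [dax, Complex.normSq_mul, Complex.normSq_mul, crb_normSq_steer_eq s ν hν i k hd,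
    Complex.normSq_ofReal, mul_comm Complex.I _, Complex.normSq_add_mul_I, ← hr]
  ring

lemma crb_pt1 (ν c d : ℝ) (hν : ν ≠ 0) (h : d^2+c ≠ 0) :
    1/(4*ν^2*(d^2+c))*d^2 = (1/(4*ν^2))*(d^2/(d^2+c)) := by
  field_simp

lemma crb_pt2 (ν c d A : ℝ) (hν : ν ≠ 0) (h : d^2+c ≠ 0) :
    (1/(4*ν^2*(d^2+c)) * A * (1/(d^2+c)^2 + ν^2/(d^2+c))) * d^4
      = (A/(4*ν^2)) * ((d^2/(d^2+c))^2*(1/(d^2+c)) + ν^2*(d^2/(d^2+c))^2) := by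
  field_simp

lemma crb_term_steer (s ν : ℝ) (hs : 0 < s) (hν : 0 < ν) (i k : ℤ) :
    Tendsto (fun d : ℝ => Complex.normSq (steer d s ν i k) * d^2) atTop
      (nhds (1/(4*ν^2))) := by
  set c : ℝ := (i:ℝ)^2*s^2 + (k:ℝ)^2*s^2 with hc
  have hc0 : 0 ≤ c := by positivity
  have h : Tendsto (fun d : ℝ => (1/(4*ν^2)) * (d^2/(d^2+c))) atTop
      (nhds ((1/(4*ν^2)) * 1)) := tendsto_const_nhds.mul (crb_aux1 c hc0)
  rw [mul_one] at h
  refine h.congr' ?_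
  filter_upwards [eventually_gt_atTop 0] with d hd
  rw [crb_normSq_steer_eq s ν hν i k hd]
  have h1 : d ^ 2 + (i:ℝ) ^ 2 * s ^ 2 + (k:ℝ) ^ 2 * s ^ 2 = d^2 + c := by rw [hc]; ring
  have hne : d^2 + c ≠ 0 := by positivity
  rw [h1, crb_pt1 ν c d hν.ne' hne]

lemma crb_term_dax (s ν : ℝ) (hs : 0 < s) (hν : 0 < ν) (i k : ℤ) :
    Tendsto (fun d : ℝ => Complex.normSq (dax d s ν i k) * d^4) atTop
      (nhds ((i:ℝ)^2*s^2/4)) := by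
  set c : ℝ := (i:ℝ)^2*s^2 + (k:ℝ)^2*s^2 with hc
  have hc0 : 0 ≤ c := by positivity
  have h : Tendsto (fun d : ℝ =>
      ((i:ℝ)^2*s^2/(4*ν^2)) * ((d^2/(d^2+c))^2 * (1/(d^2+c)) + ν^2 * (d^2/(d^2+c))^2))
      atTop (nhds (((i:ℝ)^2*s^2/(4*ν^2)) * (1^2 * 0 + ν^2 * 1^2))) :=
    tendsto_const_nhds.mul ((((crb_aux1 c hc0).pow 2).mul (crb_auxinv c)).add
      (tendsto_const_nhds.mul ((crb_aux1 c hc0).pow 2)))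
  have heq : ((i:ℝ)^2*s^2/(4*ν^2)) * (1^2 * 0 + ν^2 * 1^2) = (i:ℝ)^2*s^2/4 := by
    field_simp; ring
  rw [heq] at h
  refine h.congr' ?_
  filter_upwards [eventually_gt_atTop 0] with d hd
  rw [crb_normSq_dax_eq s ν hν i k hd]
  have h1 : d ^ 2 + (i:ℝ) ^ 2 * s ^ 2 + (k:ℝ) ^ 2 * s ^ 2 = d^2 + c := by rw [hc]; ring
  have hne : d^2 + c ≠ 0 := by positivity
  rw [h1, crb_pt2 ν c d _ hν.ne' hne]

lemma crb_rUPA_symm (d s : ℝ) (i k : ℤ) : rUPA d s k i = rUPA d s i k := by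
  unfold rUPA; congr 1; ring

lemma crb_x_part (m : ℕ) (hm : 1 ≤ m) (s ν σ : ℝ)
    (hs : 0 < s) (hν : 0 < ν) (hσ : 0 < σ) (b : ℂ) (hb : b ≠ 0) (L : ℕ) (hL : 0 < L) :
    Tendsto (fun d : ℝ =>
        (σ ^ 2 / (4 * Complex.normSq b * (L : ℝ))) *
          (1 / ((∑ i ∈ Icc (-(m : ℤ)) m, ∑ k ∈ Icc (-(m : ℤ)) m,
                  Complex.normSq (steer d s ν i k)) *
                (∑ i ∈ Icc (-(m : ℤ)) m, ∑ k ∈ Icc (-(m : ℤ)) m,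
                  Complex.normSq (dax d s ν i k)))) / d ^ 6)
      atTop
      (nhds ((48 * σ ^ 2 / (Complex.normSq b * (L : ℝ))) *
        ν ^ 2 / (((2 * (m : ℝ) + 1) ^ 2 - 1) * (2 * (m : ℝ) + 1) ^ 4 * s ^ 2))) := by
  have hbsq : 0 < Complex.normSq b := Complex.normSq_pos.mpr hb
  have hL' : (0:ℝ) < (L:ℝ) := by exact_mod_cast hL
  have hm1 : (1:ℝ) ≤ (m:ℝ) := by exact_mod_cast hm
  set I := Icc (-(m : ℤ)) m with hI
  set C : ℝ := σ ^ 2 / (4 * Complex.normSq b * (L : ℝ)) with hC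
  set La : ℝ := (2*(m:ℝ)+1)^2/(4*ν^2) with hLa
  set Lx : ℝ := ((m:ℝ)*((m:ℝ)+1)*(2*(m:ℝ)+1)/3) * ((2*(m:ℝ)+1)*s^2/4) with hLx
  have hSa : Tendsto (fun d : ℝ =>
      (∑ i ∈ I, ∑ k ∈ I, Complex.normSq (steer d s ν i k)) * d^2) atTop (nhds La) := by
    have h := tendsto_finset_sum I (fun i _ => tendsto_finset_sum I
      (fun k _ => crb_term_steer s ν hs hν i k))
    have hval : (∑ _i ∈ I, ∑ _k ∈ I, (1/(4*ν^2) : ℝ)) = La := by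
      rw [Finset.sum_const, Finset.sum_const, nsmul_eq_mul, nsmul_eq_mul, hI, crb_cardIcc, hLa]
      ring
    rw [hval] at h
    refine h.congr (fun d => ?_)
    rw [Finset.sum_mul]
    exact Finset.sum_congr rfl fun i _ => by rw [Finset.sum_mul]
  have hSx : Tendsto (fun d : ℝ =>
      (∑ i ∈ I, ∑ k ∈ I, Complex.normSq (dax d s ν i k)) * d^4) atTop (nhds Lx) := by
    have h := tendsto_finset_sum I (fun i _ => tendsto_finset_sum I
      (fun k _ => crb_term_dax s ν hs hν i k))
    have hval : (∑ i ∈ I, ∑ _k ∈ I, ((i:ℝ)^2*s^2/4 : ℝ)) = Lx := by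
      have h1 : ∀ i : ℤ, (∑ _k ∈ I, ((i:ℝ)^2*s^2/4 : ℝ)) = (i:ℝ)^2 * ((2*(m:ℝ)+1)*s^2/4) := by
        intro i
        rw [Finset.sum_const, nsmul_eq_mul, hI, crb_cardIcc]; ring
      rw [Finset.sum_congr rfl fun i _ => h1 i, ← Finset.sum_mul, hI, crb_sumsq]
    rw [hval] at h
    refine h.congr (fun d => ?_)
    rw [Finset.sum_mul]
    exact Finset.sum_congr rfl fun i _ => by rw [Finset.sum_mul]
  have hLa0 : La ≠ 0 := by rw [hLa]; positivity
  have hLx0 : Lx ≠ 0 := by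
    rw [hLx]
    have hm0 : (0:ℝ) < (m:ℝ) := lt_of_lt_of_le one_pos hm1
    positivity
  have key : Tendsto (fun d : ℝ =>
      C * (1 / ((∑ i ∈ I, ∑ k ∈ I, Complex.normSq (steer d s ν i k)) *
        (∑ i ∈ I, ∑ k ∈ I, Complex.normSq (dax d s ν i k)))) / d ^ 6)
      atTop (nhds (C / (La * Lx))) := by
    have h := Tendsto.div (tendsto_const_nhds (x := C)) (hSa.mul hSx) (mul_ne_zero hLa0 hLx0)
    refine h.congr (fun d => ?_)
    simp only [Pi.div_apply]
    ring
  have hfin : C / (La * Lx) = (48 * σ ^ 2 / (Complex.normSq b * (L : ℝ))) *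
      ν ^ 2 / (((2 * (m : ℝ) + 1) ^ 2 - 1) * (2 * (m : ℝ) + 1) ^ 4 * s ^ 2) := by
    rw [hC, hLa, hLx]
    have hm0 : (0:ℝ) < (m:ℝ) := lt_of_lt_of_le one_pos hm1
    have h2 : ((2 * (m : ℝ) + 1) ^ 2 - 1) = 4*(m:ℝ)*((m:ℝ)+1) := by ring
    rw [h2]
    field_simp
    ring
  rw [← hfin]
  exact key

end CRBHelpers

/-- Proposition 5, eq. (24): with `n = 2m+1`,
`CRB_x(d)/d⁶ → (48σ²/(|b|²L))·ν²/((n²−1)n⁴s²)` as `d → ∞`,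
and the same limit holds for the y-coordinate CRB. -/
theorem crb_x_asymptotic (m : ℕ) (hm : 1 ≤ m) (s ν σ : ℝ)
    (hs : 0 < s) (hν : 0 < ν) (hσ : 0 < σ) (b : ℂ) (hb : b ≠ 0) (L : ℕ) (hL : 0 < L) :
    Tendsto (fun d : ℝ =>
        (σ ^ 2 / (4 * Complex.normSq b * (L : ℝ))) *
          (1 / ((∑ i ∈ Icc (-(m : ℤ)) m, ∑ k ∈ Icc (-(m : ℤ)) m,
                  Complex.normSq (steer d s ν i k)) *
                (∑ i ∈ Icc (-(m : ℤ)) m, ∑ k ∈ Icc (-(m : ℤ)) m,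
                  Complex.normSq (dax d s ν i k)))) / d ^ 6)
      atTop
      (nhds ((48 * σ ^ 2 / (Complex.normSq b * (L : ℝ))) *
        ν ^ 2 / (((2 * (m : ℝ) + 1) ^ 2 - 1) * (2 * (m : ℝ) + 1) ^ 4 * s ^ 2))) ∧
    Tendsto (fun d : ℝ =>
        (σ ^ 2 / (4 * Complex.normSq b * (L : ℝ))) *
          (1 / ((∑ i ∈ Icc (-(m : ℤ)) m, ∑ k ∈ Icc (-(m : ℤ)) m,
                  Complex.normSq (steer d s ν i k)) *
                (∑ i ∈ Icc (-(m : ℤ)) m, ∑ k ∈ Icc (-(m : ℤ)) m,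
                  Complex.normSq (day d s ν i k)))) / d ^ 6)
      atTop
      (nhds ((48 * σ ^ 2 / (Complex.normSq b * (L : ℝ))) *
        ν ^ 2 / (((2 * (m : ℝ) + 1) ^ 2 - 1) * (2 * (m : ℝ) + 1) ^ 4 * s ^ 2))) := by
  have hx := crb_x_part m hm s ν σ hs hν hσ b hb L hL
  refine ⟨hx, ?_⟩
  have hswap : ∀ d : ℝ,
      (∑ i ∈ Icc (-(m : ℤ)) m, ∑ k ∈ Icc (-(m : ℤ)) m, Complex.normSq (day d s ν i k))
        = ∑ i ∈ Icc (-(m : ℤ)) m, ∑ k ∈ Icc (-(m : ℤ)) m, Complex.normSq (dax d s ν i k) := by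
    intro d
    have h1 : ∀ i k : ℤ, day d s ν i k = dax d s ν k i := by
      intro i k
      unfold day dax steer
      rw [crb_rUPA_symm d s k i]
    calc (∑ i ∈ Icc (-(m : ℤ)) m, ∑ k ∈ Icc (-(m : ℤ)) m, Complex.normSq (day d s ν i k))
        = ∑ i ∈ Icc (-(m : ℤ)) m, ∑ k ∈ Icc (-(m : ℤ)) m, Complex.normSq (dax d s ν k i) :=
          Finset.sum_congr rfl fun i _ => Finset.sum_congr rfl fun k _ => by rw [h1]
      _ = _ := Finset.sum_comm
  refine hx.congr (fun d => ?_)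
  rw [hswap d]
end
end

section
/- Fix an integer m ≥ 1 and reals s > 0, d-independent; write n = 2m+1. With D₂ᶻ(d) = 1/d⁴ + 4·Σ_{i=0}^{m}Σ_{k=1}^{m} 1/(d²+(i²+k²)s²)², D₃ᶻ(d) = 1/d³ + 4·Σ_{i=0}^{m}Σ_{k=1}^{m} 1/(d²+(i²+k²)s²)^{3/2}, and D_a(d) = 1/d² + 4·Σ_{i=0}^{m}Σ_{k=1}^{m} 1/(d²+(i²+k²)s²), one has lim_{d→∞} d¹⁰·( D₂ᶻ(d)·D_a(d) − D₃ᶻ(d)² ) = s⁴·n⁴(n²−1)(n²−4)/360. (Key limit (51)–(53) in the proof of Proposition 5, equal to s⁴(n²μ − 4β) with μ = n²(n²−1)(7n²−13)/720 and β = (n²−1)²n⁴/576.) -/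
open Finset Filter

lemma limA (a : ℝ) : Tendsto (fun d : ℝ => d^2/(d^2+a)) atTop (nhds 1) := by
  have h0 : Tendsto (fun d : ℝ => a/d^2) atTop (nhds 0) :=
    tendsto_const_nhds.div_atTop (tendsto_pow_atTop (by norm_num))
  have h1 : Tendsto (fun d : ℝ => (1 + a/d^2)⁻¹) atTop (nhds 1) := by
    have := ((tendsto_const_nhds (α := ℝ) (x := (1:ℝ))).add h0).inv₀ (by norm_num)
    simpa using this
  refine h1.congr' ?_
  filter_upwards [eventually_ge_atTop (1:ℝ)] with d hd
  have hd2 : (0:ℝ) < d^2 := by positivity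
  field_simp

lemma limB (a : ℝ) (ha : 0 ≤ a) : Tendsto (fun d : ℝ => Real.sqrt (d^2+a)/d) atTop (nhds 1) := by
  have h0 : Tendsto (fun d : ℝ => a/d^2) atTop (nhds 0) :=
    tendsto_const_nhds.div_atTop (tendsto_pow_atTop (by norm_num))
  have h2 : Tendsto (fun d : ℝ => 1 + a/d^2) atTop (nhds 1) := by
    simpa using (tendsto_const_nhds (α := ℝ) (x := (1:ℝ))).add h0
  have h1 : Tendsto (fun d : ℝ => Real.sqrt (1 + a/d^2)) atTop (nhds 1) := by
    have := (Real.continuous_sqrt.continuousAt (x := (1:ℝ))).tendsto.comp h2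
    simpa [Function.comp_def] using this
  refine h1.congr' ?_
  filter_upwards [eventually_ge_atTop (1:ℝ)] with d hd
  have hd0 : (0:ℝ) < d := by linarith
  have h3 : (1 + a/d^2) = (d^2+a)/d^2 := by field_simp
  rw [h3, Real.sqrt_div (by positivity), Real.sqrt_sq hd0.le]

lemma limC (a b : ℝ) (ha : 0 ≤ a) (hb : 0 ≤ b) :
    Tendsto (fun d : ℝ => d/(Real.sqrt (d^2+a)+Real.sqrt (d^2+b))) atTop (nhds (1/2)) := by
  have h1 : Tendsto (fun d : ℝ => (Real.sqrt (d^2+a)/d + Real.sqrt (d^2+b)/d)⁻¹)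
      atTop (nhds (1/2)) := by
    have := ((limB a ha).add (limB b hb)).inv₀ (show (1:ℝ)+1 ≠ 0 by norm_num)
    convert this using 2 <;> norm_num
  refine h1.congr' ?_
  filter_upwards [eventually_ge_atTop (1:ℝ)] with d hd
  have hd0 : (0:ℝ) < d := by linarith
  have hs1 : 0 < Real.sqrt (d^2+a) := Real.sqrt_pos.2 (by positivity)
  have hs2 : 0 < Real.sqrt (d^2+b) := Real.sqrt_pos.2 (by positivity)
  rw [div_add_div _ _ hd0.ne' hd0.ne', inv_div]
  have : 0 < Real.sqrt (d^2+a) + Real.sqrt (d^2+b) := by positivity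
  field_simp

-- the key per-pair limit
lemma keyPair (a b : ℝ) (ha : 0 ≤ a) (hb : 0 ≤ b) :
    Tendsto (fun d : ℝ => d^10 *
      ((1/2) * (1/(d^2+a)^2 * (1/(d^2+b)) + 1/(d^2+b)^2 * (1/(d^2+a)))
        - 1/((d^2+a)*Real.sqrt (d^2+a)) * (1/((d^2+b)*Real.sqrt (d^2+b)))))
      atTop (nhds ((a-b)^2/8)) := by
  have hψ : Tendsto (fun d : ℝ => (a-b)^2/2 *
      ((d^2/(d^2+a))^2 * (d^2/(d^2+b))^2 * (d/(Real.sqrt (d^2+a)+Real.sqrt (d^2+b)))^2))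
      atTop (nhds ((a-b)^2/8)) := by
    have := tendsto_const_nhds (α := ℝ) (x := (a-b)^2/2) |>.mul
      ((((limA a).pow 2).mul ((limA b).pow 2)).mul ((limC a b ha hb).pow 2))
    convert this using 2
    norm_num
    ring
  refine hψ.congr' ?_
  filter_upwards [eventually_ge_atTop (1:ℝ)] with d hd
  have hd0 : (0:ℝ) < d := by linarith
  have hxa : (0:ℝ) < d^2 + a := by positivity
  have hxb : (0:ℝ) < d^2 + b := by positivity
  set u := Real.sqrt (d^2+a) with hu
  set v := Real.sqrt (d^2+b) with hv
  have hu0 : 0 < u := Real.sqrt_pos.2 hxa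
  have hv0 : 0 < v := Real.sqrt_pos.2 hxb
  have hu2 : u^2 = d^2 + a := Real.sq_sqrt hxa.le
  have hv2 : v^2 = d^2 + b := Real.sq_sqrt hxb.le
  have hab : a - b = u^2 - v^2 := by rw [hu2, hv2]; ring
  rw [← hu2, ← hv2, hab]
  have huv : 0 < u + v := by positivity
  field_simp
  ring

lemma sumSqIcc (M : ℕ) : ∑ k ∈ Icc 1 M, (k:ℝ)^2 = M*(M+1)*(2*M+1)/6 := by
  induction M with
  | zero => simp
  | succ M ih =>
    rw [Finset.sum_Icc_succ_top (Nat.one_le_iff_ne_zero.2 (Nat.succ_ne_zero M)), ih]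
    try push_cast
    try ring

lemma sumQuIcc (M : ℕ) : ∑ k ∈ Icc 1 M, (k:ℝ)^4 = M*(M+1)*(2*M+1)*(3*(M:ℝ)^2+3*M-1)/30 := by
  induction M with
  | zero => simp
  | succ M ih =>
    rw [Finset.sum_Icc_succ_top (Nat.one_le_iff_ne_zero.2 (Nat.succ_ne_zero M)), ih]
    try push_cast
    try ring

lemma sumSqRange (M : ℕ) : ∑ i ∈ range (M+1), (i:ℝ)^2 = M*(M+1)*(2*M+1)/6 := by
  induction M with
  | zero => simp
  | succ M ih =>
    rw [Finset.sum_range_succ, ih]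
    try push_cast
    try ring

lemma sumQuRange (M : ℕ) : ∑ i ∈ range (M+1), (i:ℝ)^4 = M*(M+1)*(2*M+1)*(3*(M:ℝ)^2+3*M-1)/30 := by
  induction M with
  | zero => simp
  | succ M ih =>
    rw [Finset.sum_range_succ, ih]
    try push_cast
    try ring

lemma sumT1 (m : ℕ) : ∑ i ∈ range (m+1), ∑ k ∈ Icc 1 m, ((i:ℝ)^2+(k:ℝ)^2)
    = (2*(m:ℝ)+1)*((m:ℝ)*(m+1)*(2*m+1)/6) := by
  have hinner : ∀ i : ℕ, ∑ k ∈ Icc 1 m, ((i:ℝ)^2+(k:ℝ)^2)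
      = m*(i:ℝ)^2 + (m:ℝ)*(m+1)*(2*m+1)/6 := by
    intro i
    rw [Finset.sum_add_distrib, Finset.sum_const, sumSqIcc, Nat.card_Icc]
    simp only [Nat.add_sub_cancel, nsmul_eq_mul]
    try push_cast
    try ring
  rw [Finset.sum_congr rfl (fun i _ => hinner i), Finset.sum_add_distrib, Finset.sum_const,
    ← Finset.mul_sum, sumSqRange, Finset.card_range]
  simp only [nsmul_eq_mul]
  push_cast
  ring

lemma sumT2 (m : ℕ) : ∑ i ∈ range (m+1), ∑ k ∈ Icc 1 m, ((i:ℝ)^2+(k:ℝ)^2)^2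
    = (2*(m:ℝ)+1)*((m:ℝ)*(m+1)*(2*m+1)*(3*(m:ℝ)^2+3*m-1)/30)
      + 2*((m:ℝ)*(m+1)*(2*m+1)/6)^2 := by
  have hinner : ∀ i : ℕ, ∑ k ∈ Icc 1 m, ((i:ℝ)^2+(k:ℝ)^2)^2
      = m*(i:ℝ)^4 + ((m:ℝ)*(m+1)*(2*m+1)/3)*(i:ℝ)^2
        + (m:ℝ)*(m+1)*(2*m+1)*(3*(m:ℝ)^2+3*m-1)/30 := by
    intro i
    have : ∀ k : ℕ, ((i:ℝ)^2+(k:ℝ)^2)^2 = (i:ℝ)^4 + 2*(k:ℝ)^2*(i:ℝ)^2 + (k:ℝ)^4 := by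
      intro k; ring
    rw [Finset.sum_congr rfl (fun k _ => this k), Finset.sum_add_distrib,
      Finset.sum_add_distrib, Finset.sum_const, ← Finset.sum_mul, ← Finset.mul_sum,
      sumSqIcc, sumQuIcc, Nat.card_Icc]
    simp only [Nat.add_sub_cancel, nsmul_eq_mul]
    try push_cast
    try ring
  rw [Finset.sum_congr rfl (fun i _ => hinner i), Finset.sum_add_distrib,
    Finset.sum_add_distrib, Finset.sum_const, ← Finset.mul_sum, ← Finset.mul_sum,
    sumSqRange, sumQuRange, Finset.card_range]
  simp only [nsmul_eq_mul]
  push_cast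
  ring

def Jset (m : ℕ) : Finset (ℕ×ℕ) := insert (0,0) ((Finset.range (m+1)) ×ˢ (Finset.Icc 1 m))
noncomputable def wgt (p : ℕ×ℕ) : ℝ := if p = (0,0) then 1 else 4
def aval (s : ℝ) (p : ℕ×ℕ) : ℝ := ((p.1:ℝ)^2+(p.2:ℝ)^2)*s^2

lemma aval_nonneg (s : ℝ) (p : ℕ×ℕ) : 0 ≤ aval s p := by
  unfold aval; positivity

lemma sumJ (m : ℕ) (s : ℝ) (f : ℝ → ℝ) :
    ∑ p ∈ Jset m, wgt p * f (aval s p)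
    = f 0 + 4 * ∑ i ∈ Finset.range (m+1), ∑ k ∈ Finset.Icc 1 m, f (((i:ℝ)^2+(k:ℝ)^2)*s^2) := by
  have h00 : ((0:ℕ),(0:ℕ)) ∉ (Finset.range (m+1)) ×ˢ (Finset.Icc 1 m) := by
    simp [Finset.mem_product]
  rw [Jset, Finset.sum_insert h00]
  congr 1
  · have h0 : aval s ((0:ℕ),(0:ℕ)) = 0 := by simp [aval]
    rw [h0, wgt, if_pos rfl, one_mul]
  · rw [Finset.sum_product, Finset.mul_sum]
    refine Finset.sum_congr rfl fun i _ => ?_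
    rw [Finset.mul_sum]
    refine Finset.sum_congr rfl fun k hk => ?_
    have hk1 : 1 ≤ k := (Finset.mem_Icc.1 hk).1
    have hne : ((i,k) : ℕ×ℕ) ≠ (0,0) := by
      intro h
      rw [Prod.ext_iff] at h
      omega
    rw [wgt, if_neg hne, aval]

lemma hW (m : ℕ) (s : ℝ) : ∑ p ∈ Jset m, wgt p = 4*(m:ℝ)^2+4*m+1 := by
  have := sumJ m s (fun _ => 1)
  simp only [mul_one] at this
  rw [this]
  simp [Finset.sum_const, Nat.card_Icc, Finset.card_range]
  push_cast; ring

lemma hS1 (m : ℕ) (s : ℝ) : ∑ p ∈ Jset m, wgt p * aval s p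
    = 4*s^2*((2*(m:ℝ)+1)*((m:ℝ)*(m+1)*(2*m+1)/6)) := by
  have := sumJ m s (fun x => x)
  rw [this]
  have h1 : ∀ i k : ℕ, ((i:ℝ)^2+(k:ℝ)^2)*s^2 = s^2 * ((i:ℝ)^2+(k:ℝ)^2) := fun i k => by ring
  have h2 : ∑ i ∈ range (m+1), ∑ k ∈ Icc 1 m, ((i:ℝ)^2+(k:ℝ)^2)*s^2
      = s^2 * ∑ i ∈ range (m+1), ∑ k ∈ Icc 1 m, ((i:ℝ)^2+(k:ℝ)^2) := by
    rw [Finset.mul_sum]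
    refine Finset.sum_congr rfl fun i _ => ?_
    rw [Finset.mul_sum]
    exact Finset.sum_congr rfl fun k _ => h1 i k
  rw [h2, sumT1]
  ring

lemma hS2 (m : ℕ) (s : ℝ) : ∑ p ∈ Jset m, wgt p * (aval s p)^2
    = 4*s^4*((2*(m:ℝ)+1)*((m:ℝ)*(m+1)*(2*m+1)*(3*(m:ℝ)^2+3*m-1)/30)
      + 2*((m:ℝ)*(m+1)*(2*m+1)/6)^2) := by
  have := sumJ m s (fun x => x^2)
  rw [this]
  have h2 : ∑ i ∈ range (m+1), ∑ k ∈ Icc 1 m, (((i:ℝ)^2+(k:ℝ)^2)*s^2)^2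
      = s^4 * ∑ i ∈ range (m+1), ∑ k ∈ Icc 1 m, ((i:ℝ)^2+(k:ℝ)^2)^2 := by
    rw [Finset.mul_sum]
    refine Finset.sum_congr rfl fun i _ => ?_
    rw [Finset.mul_sum]
    exact Finset.sum_congr rfl fun k _ => by ring
  rw [h2, sumT2]
  ring

lemma finalSum (m : ℕ) (s : ℝ) :
    ∑ p ∈ Jset m, ∑ q ∈ Jset m, (wgt p * wgt q) * ((aval s p - aval s q)^2/8)
    = s ^ 4 * (2 * (m : ℝ) + 1) ^ 4 * ((2 * (m : ℝ) + 1) ^ 2 - 1) *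
        ((2 * (m : ℝ) + 1) ^ 2 - 4) / 360 := by
  have inner : ∀ p, ∑ q ∈ Jset m, (wgt p * wgt q) * ((aval s p - aval s q)^2/8)
      = (wgt p * (aval s p)^2) * ((1/8) * ∑ q ∈ Jset m, wgt q)
        - (wgt p * aval s p) * ((1/4) * ∑ q ∈ Jset m, wgt q * aval s q)
        + wgt p * ((1/8) * ∑ q ∈ Jset m, wgt q * (aval s q)^2) := by
    intro p
    rw [Finset.mul_sum, Finset.mul_sum, Finset.mul_sum, Finset.mul_sum, Finset.mul_sum,
      Finset.mul_sum, ← Finset.sum_sub_distrib, ← Finset.sum_add_distrib]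
    exact Finset.sum_congr rfl fun q _ => by ring
  rw [Finset.sum_congr rfl fun p _ => inner p, Finset.sum_add_distrib,
    Finset.sum_sub_distrib, ← Finset.sum_mul, ← Finset.sum_mul, ← Finset.sum_mul,
    hW m s, hS1, hS2]
  field_simp
  ring

lemma Dsum2 (m : ℕ) (s d : ℝ) :
    ∑ p ∈ Jset m, wgt p * (1/(d^2+aval s p)^2)
    = 1/d^4 + 4 * ∑ i ∈ Finset.range (m+1), ∑ k ∈ Finset.Icc 1 m,
        1/(d^2+((i:ℝ)^2+(k:ℝ)^2)*s^2)^2 := by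
  rw [sumJ m s (fun x => 1/(d^2+x)^2)]
  norm_num [← pow_mul]

lemma Dsum1 (m : ℕ) (s d : ℝ) :
    ∑ p ∈ Jset m, wgt p * (1/(d^2+aval s p))
    = 1/d^2 + 4 * ∑ i ∈ Finset.range (m+1), ∑ k ∈ Finset.Icc 1 m,
        1/(d^2+((i:ℝ)^2+(k:ℝ)^2)*s^2) := by
  rw [sumJ m s (fun x => 1/(d^2+x))]
  norm_num

lemma Dsum3 (m : ℕ) (s d : ℝ) (hd : 0 < d) :
    ∑ p ∈ Jset m, wgt p * (1/((d^2+aval s p)*Real.sqrt (d^2+aval s p)))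
    = 1/d^3 + 4 * ∑ i ∈ Finset.range (m+1), ∑ k ∈ Finset.Icc 1 m,
        1/((d^2+((i:ℝ)^2+(k:ℝ)^2)*s^2)*Real.sqrt (d^2+((i:ℝ)^2+(k:ℝ)^2)*s^2)) := by
  rw [sumJ m s (fun x => 1/((d^2+x)*Real.sqrt (d^2+x)))]
  congr 1
  simp only [add_zero, Real.sqrt_sq hd.le]
  rw [show d^2*d = d^3 by ring]

lemma pointwise (m : ℕ) (s d : ℝ) (hd : 0 < d) :
    d ^ 10 *
        ((1 / d ^ 4 + 4 * ∑ i ∈ Finset.range (m + 1), ∑ k ∈ Finset.Icc 1 m,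
            1 / (d ^ 2 + ((i : ℝ) ^ 2 + (k : ℝ) ^ 2) * s ^ 2) ^ 2) *
         (1 / d ^ 2 + 4 * ∑ i ∈ Finset.range (m + 1), ∑ k ∈ Finset.Icc 1 m,
            1 / (d ^ 2 + ((i : ℝ) ^ 2 + (k : ℝ) ^ 2) * s ^ 2)) -
         (1 / d ^ 3 + 4 * ∑ i ∈ Finset.range (m + 1), ∑ k ∈ Finset.Icc 1 m,
            1 / ((d ^ 2 + ((i : ℝ) ^ 2 + (k : ℝ) ^ 2) * s ^ 2) *
              Real.sqrt (d ^ 2 + ((i : ℝ) ^ 2 + (k : ℝ) ^ 2) * s ^ 2))) ^ 2)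
    = ∑ p ∈ Jset m, ∑ q ∈ Jset m, (wgt p * wgt q) *
        (d^10 * ((1/2) * (1/(d^2+aval s p)^2 * (1/(d^2+aval s q))
            + 1/(d^2+aval s q)^2 * (1/(d^2+aval s p)))
          - 1/((d^2+aval s p)*Real.sqrt (d^2+aval s p))
            * (1/((d^2+aval s q)*Real.sqrt (d^2+aval s q))))) := by
  rw [← Dsum2 m s d, ← Dsum1 m s d, ← Dsum3 m s d hd]
  have h3 : (∑ p ∈ Jset m, wgt p * (1/((d^2+aval s p)*Real.sqrt (d^2+aval s p))))^2
      = ∑ p ∈ Jset m, ∑ q ∈ Jset m,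
          (wgt p * (1/((d^2+aval s p)*Real.sqrt (d^2+aval s p))))
          * (wgt q * (1/((d^2+aval s q)*Real.sqrt (d^2+aval s q)))) := by
    rw [pow_two, Finset.sum_mul_sum]
  rw [h3, Finset.sum_mul_sum]
  -- combine into one double sum F
  have hstep : d ^ 10 *
      ((∑ p ∈ Jset m, ∑ q ∈ Jset m, (wgt p * (1/(d^2+aval s p)^2)) * (wgt q * (1/(d^2+aval s q))))
        - ∑ p ∈ Jset m, ∑ q ∈ Jset m,
          (wgt p * (1/((d^2+aval s p)*Real.sqrt (d^2+aval s p))))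
          * (wgt q * (1/((d^2+aval s q)*Real.sqrt (d^2+aval s q)))))
      = ∑ p ∈ Jset m, ∑ q ∈ Jset m, (wgt p * wgt q) *
          (d^10 * (1/(d^2+aval s p)^2 * (1/(d^2+aval s q))
            - 1/((d^2+aval s p)*Real.sqrt (d^2+aval s p))
              * (1/((d^2+aval s q)*Real.sqrt (d^2+aval s q))))) := by
    rw [← Finset.sum_sub_distrib, Finset.mul_sum]
    refine Finset.sum_congr rfl fun p _ => ?_
    rw [← Finset.sum_sub_distrib, Finset.mul_sum]
    exact Finset.sum_congr rfl fun q _ => by ring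
  rw [hstep]
  -- symmetrize
  set F : ℕ×ℕ → ℕ×ℕ → ℝ := fun p q => (wgt p * wgt q) *
      (d^10 * (1/(d^2+aval s p)^2 * (1/(d^2+aval s q))
        - 1/((d^2+aval s p)*Real.sqrt (d^2+aval s p))
          * (1/((d^2+aval s q)*Real.sqrt (d^2+aval s q))))) with hF
  have hcomm : ∑ p ∈ Jset m, ∑ q ∈ Jset m, F q p = ∑ p ∈ Jset m, ∑ q ∈ Jset m, F p q :=
    Finset.sum_comm
  calc ∑ p ∈ Jset m, ∑ q ∈ Jset m, F p q
      = ∑ p ∈ Jset m, ∑ q ∈ Jset m, ((1/2) * F p q + (1/2) * F q p) := by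
        have hsplit : ∀ p ∈ Jset m, ∑ q ∈ Jset m, ((1/2) * F p q + (1/2) * F q p)
            = (1/2) * (∑ q ∈ Jset m, F p q) + (1/2) * (∑ q ∈ Jset m, F q p) := by
          intro p _
          rw [Finset.sum_add_distrib, Finset.mul_sum, Finset.mul_sum]
        rw [Finset.sum_congr rfl hsplit, Finset.sum_add_distrib, ← Finset.mul_sum,
          ← Finset.mul_sum, hcomm]
        ring
    _ = _ := by
        refine Finset.sum_congr rfl fun p _ => Finset.sum_congr rfl fun q _ => ?_
        rw [hF]
        ring

/-- Key limit (51)–(53) in the proof of Proposition 5: with `n = 2m+1`,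
`d¹⁰·(D₂ᶻ(d)·D_a(d) − D₃ᶻ(d)²) → s⁴·n⁴(n²−1)(n²−4)/360` as `d → ∞`. -/
theorem limit_d10_Dz (m : ℕ) (hm : 1 ≤ m) (s : ℝ) (hs : 0 < s) :
    Tendsto (fun d : ℝ =>
        d ^ 10 *
          ((1 / d ^ 4 + 4 * ∑ i ∈ Finset.range (m + 1), ∑ k ∈ Finset.Icc 1 m,
              1 / (d ^ 2 + ((i : ℝ) ^ 2 + (k : ℝ) ^ 2) * s ^ 2) ^ 2) *
           (1 / d ^ 2 + 4 * ∑ i ∈ Finset.range (m + 1), ∑ k ∈ Finset.Icc 1 m,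
              1 / (d ^ 2 + ((i : ℝ) ^ 2 + (k : ℝ) ^ 2) * s ^ 2)) -
           (1 / d ^ 3 + 4 * ∑ i ∈ Finset.range (m + 1), ∑ k ∈ Finset.Icc 1 m,
              1 / ((d ^ 2 + ((i : ℝ) ^ 2 + (k : ℝ) ^ 2) * s ^ 2) *
                Real.sqrt (d ^ 2 + ((i : ℝ) ^ 2 + (k : ℝ) ^ 2) * s ^ 2))) ^ 2))
      atTop
      (nhds (s ^ 4 * (2 * (m : ℝ) + 1) ^ 4 * ((2 * (m : ℝ) + 1) ^ 2 - 1) *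
        ((2 * (m : ℝ) + 1) ^ 2 - 4) / 360)) := by
  have hlim : Tendsto (fun d : ℝ => ∑ p ∈ Jset m, ∑ q ∈ Jset m, (wgt p * wgt q) *
      (d^10 * ((1/2) * (1/(d^2+aval s p)^2 * (1/(d^2+aval s q))
          + 1/(d^2+aval s q)^2 * (1/(d^2+aval s p)))
        - 1/((d^2+aval s p)*Real.sqrt (d^2+aval s p))
          * (1/((d^2+aval s q)*Real.sqrt (d^2+aval s q)))))) atTop
      (nhds (∑ p ∈ Jset m, ∑ q ∈ Jset m, (wgt p * wgt q) * ((aval s p - aval s q)^2/8))) := by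
    refine tendsto_finset_sum _ fun p _ => ?_
    refine tendsto_finset_sum _ fun q _ => ?_
    exact (keyPair (aval s p) (aval s q) (aval_nonneg s p) (aval_nonneg s q)).const_mul _
  rw [← finalSum m s]
  refine hlim.congr' ?_
  filter_upwards [eventually_gt_atTop (0:ℝ)] with d hd
  exact (pointwise m s d hd).symm
end

section
/- Fix reals d > 0, s > 0, ν > 0, σ > 0, a nonzero complex number b, and a positive integer L. For each integer m ≥ 1, let a^{(m)} and ȧ_z^{(m)} be the steering vector and its z-derivative for the square UPA with half-side m, and define CRB_z(m) = (σ²/(4|b|²L))·1/(‖a^{(m)}‖²·‖ȧ_z^{(m)}‖² − |(ȧ_z^{(m)})ᴴ a^{(m)}|²). Then lim_{m→∞} CRB_z(m) = 0; in particular the denominator ‖a^{(m)}‖²·‖ȧ_z^{(m)}‖² − |(ȧ_z^{(m)})ᴴ a^{(m)}|² tends to +∞ as m → ∞. (Proposition 6, part (23): the z-coordinate (range) CRB vanishes as the array aperture grows with fixed target distance.) -/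
open Finset Filter

noncomputable section

/-! ### Auxiliary definitions and lemmas -/

/-- The product index set of the square array of half-side `m`. -/
def TTset (m : ℕ) : Finset (ℤ × ℤ) := Icc (-(m : ℤ)) m ×ˢ Icc (-(m : ℤ)) m

/-- The squared magnitude of a steering-vector entry, as a function on pairs. -/
def uF (d s ν : ℝ) (p : ℤ × ℤ) : ℝ := Complex.normSq (steer d s ν p.1 p.2)

/-- The reciprocal distance, as a function on pairs. -/
def vF (d s : ℝ) (p : ℤ × ℤ) : ℝ := 1 / rUPA d s p.1 p.2

lemma le_rUPA (d s : ℝ) (hd : 0 < d) (i k : ℤ) : d ≤ rUPA d s i k := by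
  have h0 : (0:ℝ) ≤ (i : ℝ) ^ 2 * s ^ 2 + (k : ℝ) ^ 2 * s ^ 2 := by positivity
  calc d = Real.sqrt (d^2) := by rw [Real.sqrt_sq hd.le]
  _ ≤ _ := Real.sqrt_le_sqrt (by linarith)

lemma rUPA_zero (d s : ℝ) (hd : 0 < d) : rUPA d s 0 0 = d := by
  unfold rUPA
  simp [Real.sqrt_sq hd.le]

lemma normSq_steer (d s ν : ℝ) (i k : ℤ) :
    Complex.normSq (steer d s ν i k) = (1 / (2 * ν * rUPA d s i k)) ^ 2 := by
  unfold steer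
  rw [Complex.normSq_mul]
  have : Complex.normSq (Complex.exp (-Complex.I * (ν : ℂ) * ((rUPA d s i k : ℝ) : ℂ))) = 1 := by
    rw [Complex.normSq_eq_norm_sq, Complex.norm_exp]
    simp
  rw [this, Complex.normSq_ofReal]
  ring

lemma normSq_daz (d s ν : ℝ) (i k : ℤ) :
    Complex.normSq (daz d s ν i k) =
      Complex.normSq (steer d s ν i k) * d ^ 2 *
        ((1 / rUPA d s i k ^ 2) ^ 2 + (ν / rUPA d s i k) ^ 2) := by
  unfold daz
  rw [neg_mul, neg_mul, Complex.normSq_neg, Complex.normSq_mul, Complex.normSq_mul]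
  have : Complex.normSq (((1 / rUPA d s i k ^ 2 : ℝ) : ℂ) + Complex.I * ((ν / rUPA d s i k : ℝ) : ℂ))
      = (1 / rUPA d s i k ^ 2) ^ 2 + (ν / rUPA d s i k) ^ 2 := by
    rw [mul_comm Complex.I, Complex.normSq_add_mul_I]
  rw [this, Complex.normSq_ofReal]
  ring

lemma conj_daz_steer (d s ν : ℝ) (i k : ℤ) :
    (starRingEnd ℂ) (daz d s ν i k) * steer d s ν i k =
      ((-(d * Complex.normSq (steer d s ν i k) * (1 / rUPA d s i k ^ 2)) : ℝ) : ℂ)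
        + ((d * ν * Complex.normSq (steer d s ν i k) * (1 / rUPA d s i k) : ℝ) : ℂ) * Complex.I := by
  have hconj : (starRingEnd ℂ) (steer d s ν i k) * steer d s ν i k
      = (Complex.normSq (steer d s ν i k) : ℂ) := by
    rw [mul_comm, Complex.mul_conj]
  simp only [daz, map_mul, map_neg, map_add, Complex.conj_I, Complex.conj_ofReal]
  push_cast
  linear_combination (-(d:ℂ) * (((rUPA d s i k:ℂ))⁻¹^2 - Complex.I * (ν / rUPA d s i k))) * hconj

lemma cs_finset {α : Type*} (T : Finset α) (u w : α → ℝ) (hu : ∀ p ∈ T, 0 ≤ u p) :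
    (∑ p ∈ T, u p * w p)^2 ≤ (∑ p ∈ T, u p) * (∑ p ∈ T, u p * (w p)^2) := by
  have h := Finset.sum_mul_sq_le_sq_mul_sq T (fun p => Real.sqrt (u p))
      (fun p => Real.sqrt (u p) * w p)
  have e1 : ∑ p ∈ T, Real.sqrt (u p) * (Real.sqrt (u p) * w p) = ∑ p ∈ T, u p * w p :=
    Finset.sum_congr rfl fun p hp => by
      rw [← mul_assoc, Real.mul_self_sqrt (hu p hp)]
  have e2 : ∑ p ∈ T, Real.sqrt (u p) ^ 2 = ∑ p ∈ T, u p :=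
    Finset.sum_congr rfl fun p hp => Real.sq_sqrt (hu p hp)
  have e3 : ∑ p ∈ T, (Real.sqrt (u p) * w p) ^ 2 = ∑ p ∈ T, u p * (w p)^2 :=
    Finset.sum_congr rfl fun p hp => by
      rw [mul_pow, Real.sq_sqrt (hu p hp)]
  rw [e1, e2, e3] at h
  exact h

lemma gap_ge {α : Type*} [DecidableEq α] (T : Finset α) (u v : α → ℝ)
    (hu : ∀ p ∈ T, 0 ≤ u p) (p0 : α) (h0 : p0 ∈ T) :
    u p0 * ∑ p ∈ T, u p * (v p - v p0)^2 ≤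
      (∑ p ∈ T, u p) * (∑ p ∈ T, u p * (v p)^2) - (∑ p ∈ T, u p * v p)^2 := by
  classical
  have hsplit : ∀ f : α → ℝ, ∑ p ∈ T, f p = f p0 + ∑ p ∈ T.erase p0, f p := fun f =>
    (Finset.add_sum_erase T f h0).symm
  have hu' : ∀ p ∈ T.erase p0, 0 ≤ u p := fun p hp => hu p (Finset.mem_of_mem_erase hp)
  have hCS := cs_finset (T.erase p0) u v hu'
  have hE : ∑ p ∈ T.erase p0, u p * (v p - v p0)^2 =
      (∑ p ∈ T.erase p0, u p * (v p)^2) - 2 * v p0 * (∑ p ∈ T.erase p0, u p * v p)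
        + (v p0)^2 * (∑ p ∈ T.erase p0, u p) := by
    rw [Finset.mul_sum, Finset.mul_sum, ← Finset.sum_sub_distrib, ← Finset.sum_add_distrib]
    exact Finset.sum_congr rfl fun p _ => by ring
  rw [hsplit (fun p => u p * (v p - v p0)^2), hsplit u,
      hsplit (fun p => u p * (v p)^2), hsplit (fun p => u p * v p), hE]
  have h0' : 0 ≤ u p0 := hu p0 h0
  nlinarith [hCS]

lemma harm_tendsto (c : ℝ) (hc : 0 < c) (N : ℕ) :
    Tendsto (fun m : ℕ => ∑ i ∈ Finset.Icc (N:ℤ) (m:ℤ), c / ((i:ℝ)+1)) atTop atTop := by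
  have hconv : ∀ m : ℕ, ∑ i ∈ Finset.Icc (N:ℤ) (m:ℤ), c / ((i:ℝ)+1)
      = ∑ j ∈ Finset.Icc N m, c / ((j:ℝ)+1) := by
    intro m
    refine Finset.sum_nbij' (fun i => i.toNat) (fun j => (j:ℤ)) ?_ ?_ ?_ ?_ ?_
    · intro a ha
      simp only [Finset.mem_Icc] at ha ⊢
      omega
    · intro a ha
      simp only [Finset.mem_Icc] at ha ⊢
      omega
    · intro a ha
      simp only [Finset.mem_Icc] at ha
      show ((a.toNat : ℕ) : ℤ) = a
      omega
    · intro a _; simp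
    · intro a ha
      simp only [Finset.mem_Icc] at ha
      have : ((a.toNat : ℕ) : ℝ) = (a : ℝ) := by
        have := Int.toNat_of_nonneg (by omega : (0:ℤ) ≤ a)
        exact_mod_cast congrArg (Int.cast : ℤ → ℝ) this
      rw [this]
  have hH : Tendsto (fun n : ℕ => ∑ j ∈ Finset.range n, c / ((j:ℝ)+1)) atTop atTop := by
    have := Real.tendsto_sum_range_one_div_nat_succ_atTop.const_mul_atTop hc
    refine this.congr fun n => ?_
    rw [Finset.mul_sum]
    exact Finset.sum_congr rfl fun j _ => by rw [mul_one_div]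
  have key : ∀ m : ℕ, N ≤ m + 1 →
      ∑ j ∈ Finset.Icc N m, c / ((j:ℝ)+1)
        = (∑ j ∈ Finset.range (m+1), c / ((j:ℝ)+1)) - ∑ j ∈ Finset.range N, c / ((j:ℝ)+1) := by
    intro m hm
    have := Finset.sum_Ico_consecutive (fun j : ℕ => c / ((j:ℝ)+1)) (Nat.zero_le N) hm
    rw [← Finset.range_eq_Ico] at this
    rw [← Finset.Ico_add_one_right_eq_Icc, eq_sub_iff_add_eq, add_comm]
    rwa [← Finset.range_eq_Ico] at this
  have h2 : Tendsto (fun m : ℕ => (∑ j ∈ Finset.range (m+1), c / ((j:ℝ)+1))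
      - ∑ j ∈ Finset.range N, c / ((j:ℝ)+1)) atTop atTop :=
    (tendsto_atTop_add_const_right _ _ (hH.comp (tendsto_add_atTop_nat 1)))
  refine Tendsto.congr' ?_ h2
  filter_upwards [eventually_ge_atTop N] with m hm
  rw [hconv m, key m (by omega)]

/-- Per-entry lower bound used in the divergence argument. -/
lemma per_term (d s ν : ℝ) (hd : 0 < d) (hs : 0 < s) (hν : 0 < ν) (i k : ℤ)
    (hk0 : 0 ≤ k) (hki : k ≤ i) (hNs : 2*d ≤ (i:ℝ)*s) :
    1/(16*d^2*ν^2*(d^2+2*s^2)) / ((i:ℝ)+1)^2 ≤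
      Complex.normSq (steer d s ν i k) * (1/rUPA d s i k - 1/d)^2 := by
  set r := rUPA d s i k with hrdef
  have hi0 : (0:ℝ) ≤ (i:ℝ) := by exact_mod_cast le_trans hk0 hki
  have hkr : (k:ℝ) ≤ (i:ℝ) := by exact_mod_cast hki
  have hk0r : (0:ℝ) ≤ (k:ℝ) := by exact_mod_cast hk0
  have hr2 : r^2 = d ^ 2 + (i : ℝ) ^ 2 * s ^ 2 + (k : ℝ) ^ 2 * s ^ 2 := rUPA_sq d s i k
  have hrpos : 0 < r := rUPA_pos d s hd i k
  have h2d : 2*d ≤ r := by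
    have h1 : (2*d)^2 ≤ r^2 := by nlinarith
    nlinarith
  have hk2 : (k:ℝ)^2 ≤ (i:ℝ)^2 := by nlinarith
  have hub : r^2 ≤ (d^2+2*s^2)*((i:ℝ)+1)^2 := by
    have h1 : (k:ℝ)^2 * s^2 ≤ (i:ℝ)^2 * s^2 := by nlinarith
    have h2 : (0:ℝ) ≤ d^2 * (i:ℝ)^2 := by positivity
    have h3 : (0:ℝ) ≤ d^2 * (i:ℝ) := by positivity
    have h4 : (0:ℝ) ≤ s^2 * (i:ℝ) := by positivity
    nlinarith
  have hvr : 1/r ≤ 1/(2*d) := one_div_le_one_div_of_le (by positivity) h2d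
  have h1 : (1/(2*d))^2 ≤ (1/r - 1/d)^2 := by
    have hstep : 1/d - 1/(2*d) = 1/(2*d) := by field_simp; ring
    have ha : 1/(2*d) ≤ 1/d - 1/r := by linarith
    have hb : (1/(2*d))^2 ≤ (1/d - 1/r)^2 := pow_le_pow_left₀ (by positivity) ha 2
    have heq : (1/r - 1/d)^2 = (1/d - 1/r)^2 := by ring
    linarith
  rw [normSq_steer]
  have h2 : 1/(4*ν^2*(d^2+2*s^2)*((i:ℝ)+1)^2) ≤ (1 / (2 * ν * r)) ^ 2 := by
    have he : (1 / (2 * ν * r)) ^ 2 = 1/(4*ν^2*r^2) := by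
      field_simp; ring
    rw [he]
    apply one_div_le_one_div_of_le (by positivity)
    nlinarith
  have hip : (0:ℝ) < ((i:ℝ)+1)^2 := by positivity
  calc 1/(16*d^2*ν^2*(d^2+2*s^2)) / ((i:ℝ)+1)^2
      = (1/(4*ν^2*(d^2+2*s^2)*((i:ℝ)+1)^2)) * (1/(2*d))^2 := by
        field_simp; ring
    _ ≤ (1 / (2 * ν * r)) ^ 2 * (1/r - 1/d)^2 := by
        apply mul_le_mul h2 h1 (by positivity) (by positivity)


lemma sum_steer_eq (d s ν : ℝ) (m : ℕ) :
    (∑ i ∈ Icc (-(m:ℤ)) m, ∑ k ∈ Icc (-(m:ℤ)) m, Complex.normSq (steer d s ν i k))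
      = ∑ p ∈ TTset m, uF d s ν p := by
  rw [TTset, Finset.sum_product]
  rfl

lemma sum_daz_eq (d s ν : ℝ) (m : ℕ) :
    (∑ i ∈ Icc (-(m:ℤ)) m, ∑ k ∈ Icc (-(m:ℤ)) m, Complex.normSq (daz d s ν i k))
      = d^2 * (∑ p ∈ TTset m, uF d s ν p * ((vF d s p)^2)^2)
        + d^2 * ν^2 * (∑ p ∈ TTset m, uF d s ν p * (vF d s p)^2) := by
  have h0 : (∑ i ∈ Icc (-(m:ℤ)) m, ∑ k ∈ Icc (-(m:ℤ)) m, Complex.normSq (daz d s ν i k))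
      = ∑ p ∈ TTset m, Complex.normSq (daz d s ν p.1 p.2) := by
    rw [TTset, Finset.sum_product]
  rw [h0, Finset.mul_sum, Finset.mul_sum, ← Finset.sum_add_distrib]
  refine Finset.sum_congr rfl fun p _ => ?_
  rw [normSq_daz]
  show _ = d ^ 2 * (Complex.normSq (steer d s ν p.1 p.2) * ((1 / rUPA d s p.1 p.2) ^ 2) ^ 2)
      + d ^ 2 * ν ^ 2 * (Complex.normSq (steer d s ν p.1 p.2) * (1 / rUPA d s p.1 p.2) ^ 2)
  rw [div_pow, div_pow, div_pow]
  ring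

lemma sum_conj_eq (d s ν : ℝ) (m : ℕ) :
    Complex.normSq (∑ i ∈ Icc (-(m:ℤ)) m, ∑ k ∈ Icc (-(m:ℤ)) m,
        (starRingEnd ℂ) (daz d s ν i k) * steer d s ν i k)
      = d^2 * (∑ p ∈ TTset m, uF d s ν p * (vF d s p)^2)^2
        + d^2 * ν^2 * (∑ p ∈ TTset m, uF d s ν p * vF d s p)^2 := by
  set S := ∑ i ∈ Icc (-(m:ℤ)) m, ∑ k ∈ Icc (-(m:ℤ)) m,
      (starRingEnd ℂ) (daz d s ν i k) * steer d s ν i k with hS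
  have h0 : S = ∑ p ∈ TTset m,
      (starRingEnd ℂ) (daz d s ν p.1 p.2) * steer d s ν p.1 p.2 := by
    rw [hS, TTset, Finset.sum_product]
  have hre : S.re = -(d * ∑ p ∈ TTset m, uF d s ν p * (vF d s p)^2) := by
    rw [h0, Complex.re_sum, Finset.mul_sum, ← Finset.sum_neg_distrib]
    refine Finset.sum_congr rfl fun p _ => ?_
    rw [conj_daz_steer]
    simp only [Complex.add_re, Complex.ofReal_re, Complex.mul_re, Complex.I_re,
      Complex.ofReal_im, Complex.I_im]
    show _ = -(d * (Complex.normSq (steer d s ν p.1 p.2) * (1 / rUPA d s p.1 p.2) ^ 2))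
    rw [div_pow]
    ring
  have him : S.im = d * ν * ∑ p ∈ TTset m, uF d s ν p * vF d s p := by
    rw [h0, Complex.im_sum, Finset.mul_sum]
    refine Finset.sum_congr rfl fun p _ => ?_
    rw [conj_daz_steer]
    simp only [Complex.add_im, Complex.ofReal_im, Complex.mul_im, Complex.I_im,
      Complex.ofReal_re, Complex.I_re]
    show _ = d * ν * (Complex.normSq (steer d s ν p.1 p.2) * (1 / rUPA d s p.1 p.2))
    ring
  rw [Complex.normSq_apply, hre, him]
  ring

lemma G_lower (d s ν : ℝ) (hd : 0 < d) (hs : 0 < s) (hν : 0 < ν)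
    (N : ℕ) (hNs : 2*d ≤ (N:ℝ)*s) (m : ℕ) :
    (∑ i ∈ Finset.Icc (N:ℤ) (m:ℤ), (1/(16*d^2*ν^2*(d^2+2*s^2))) / ((i:ℝ)+1))
      ≤ ∑ p ∈ TTset m, uF d s ν p * (vF d s p - 1/d)^2 := by
  set c₂ := 1/(16*d^2*ν^2*(d^2+2*s^2)) with hc2
  have hterm_nonneg : ∀ p : ℤ×ℤ, 0 ≤ uF d s ν p * (vF d s p - 1/d)^2 := fun p =>
    mul_nonneg (Complex.normSq_nonneg _) (sq_nonneg _)
  have hG : ∑ p ∈ TTset m, uF d s ν p * (vF d s p - 1/d)^2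
      = ∑ i ∈ Icc (-(m:ℤ)) m, ∑ k ∈ Icc (-(m:ℤ)) m,
          uF d s ν (i,k) * (vF d s (i,k) - 1/d)^2 := by
    rw [TTset, Finset.sum_product]
  rw [hG]
  have hsubI : Finset.Icc (N:ℤ) (m:ℤ) ⊆ Finset.Icc (-(m:ℤ)) m := by
    intro i hi; simp only [Finset.mem_Icc] at hi ⊢; omega
  refine le_trans ?_ (Finset.sum_le_sum_of_subset_of_nonneg hsubI
    (fun i _ _ => Finset.sum_nonneg fun k _ => hterm_nonneg (i,k)))
  refine Finset.sum_le_sum fun i hi => ?_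
  simp only [Finset.mem_Icc] at hi
  obtain ⟨hiN, him⟩ := hi
  have hi0 : (0:ℤ) ≤ i := le_trans (by exact_mod_cast Nat.zero_le N) hiN
  have hip : (0:ℝ) < (i:ℝ) + 1 := by
    have : (0:ℝ) ≤ (i:ℝ) := by exact_mod_cast hi0
    linarith
  have hsubK : Finset.Icc (0:ℤ) i ⊆ Finset.Icc (-(m:ℤ)) m := by
    intro k hk; simp only [Finset.mem_Icc] at hk ⊢; omega
  refine le_trans ?_ (Finset.sum_le_sum_of_subset_of_nonneg hsubK
    (fun k _ _ => hterm_nonneg (i,k)))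
  have hper : ∀ k ∈ Finset.Icc (0:ℤ) i,
      c₂ / ((i:ℝ)+1)^2 ≤ uF d s ν (i,k) * (vF d s (i,k) - 1/d)^2 := by
    intro k hk
    simp only [Finset.mem_Icc] at hk
    have his : 2*d ≤ (i:ℝ)*s := by
      have hNi : (N:ℝ) ≤ (i:ℝ) := by exact_mod_cast hiN
      nlinarith
    exact per_term d s ν hd hs hν i k hk.1 hk.2 his
  have hcard := Finset.card_nsmul_le_sum (Finset.Icc (0:ℤ) i) _ _ hper
  have hc : (((Finset.Icc (0:ℤ) i).card : ℕ) : ℝ) = (i:ℝ) + 1 := by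
    rw [Int.card_Icc, sub_zero]
    have h1 := Int.toNat_of_nonneg (by omega : (0:ℤ) ≤ i + 1)
    have h2 : (((i+1).toNat : ℕ) : ℝ) = ((i+1 : ℤ) : ℝ) := by
      exact_mod_cast congrArg (Int.cast : ℤ → ℝ) h1
    rw [h2]; push_cast; ring
  rw [nsmul_eq_mul, hc] at hcard
  refine le_trans (le_of_eq ?_) hcard
  field_simp

/-- Proposition 6, part (23): with `d, s, ν, σ, b, L` fixed, the z-coordinate
CRB `CRB_z(m) = (σ²/(4|b|²L))·1/(‖a^{(m)}‖²·‖ȧ_z^{(m)}‖² − |(ȧ_z^{(m)})ᴴ a^{(m)}|²)`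
vanishes as the array half-side `m → ∞`; in particular its denominator tends
to `+∞`. -/
theorem crb_z_vanishes_large_array (d s ν σ : ℝ)
    (hd : 0 < d) (hs : 0 < s) (hν : 0 < ν) (hσ : 0 < σ) (b : ℂ) (hb : b ≠ 0)
    (L : ℕ) (hL : 0 < L) :
    Tendsto (fun m : ℕ =>
        (σ ^ 2 / (4 * Complex.normSq b * (L : ℝ))) *
          (1 / ((∑ i ∈ Icc (-(m : ℤ)) m, ∑ k ∈ Icc (-(m : ℤ)) m,
                  Complex.normSq (steer d s ν i k)) *
                (∑ i ∈ Icc (-(m : ℤ)) m, ∑ k ∈ Icc (-(m : ℤ)) m,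
                  Complex.normSq (daz d s ν i k)) -
                Complex.normSq (∑ i ∈ Icc (-(m : ℤ)) m, ∑ k ∈ Icc (-(m : ℤ)) m,
                  (starRingEnd ℂ) (daz d s ν i k) * steer d s ν i k))))
      atTop (nhds 0) ∧
    Tendsto (fun m : ℕ =>
        (∑ i ∈ Icc (-(m : ℤ)) m, ∑ k ∈ Icc (-(m : ℤ)) m,
            Complex.normSq (steer d s ν i k)) *
          (∑ i ∈ Icc (-(m : ℤ)) m, ∑ k ∈ Icc (-(m : ℤ)) m,
            Complex.normSq (daz d s ν i k)) -
          Complex.normSq (∑ i ∈ Icc (-(m : ℤ)) m, ∑ k ∈ Icc (-(m : ℤ)) m,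
            (starRingEnd ℂ) (daz d s ν i k) * steer d s ν i k))
      atTop atTop := by
  classical
  set c₂ : ℝ := 1/(16*d^2*ν^2*(d^2+2*s^2)) with hc2
  set N : ℕ := ⌈2*d/s⌉₊ + 1 with hN
  have hNs : 2*d ≤ (N:ℝ)*s := by
    have h1 : 2*d/s ≤ (⌈2*d/s⌉₊ : ℝ) := Nat.le_ceil _
    have h2 : (⌈2*d/s⌉₊ : ℝ) ≤ (N:ℝ) := by rw [hN]; push_cast; linarith
    rw [div_le_iff₀ hs] at h1
    nlinarith
  have hu0 : (0:ℝ) < uF d s ν (0,0) := by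
    have h : uF d s ν (0,0) = Complex.normSq (steer d s ν 0 0) := rfl
    rw [h, normSq_steer]
    have hr := rUPA_pos d s hd 0 0
    positivity
  have hc2pos : (0:ℝ) < c₂ := by rw [hc2]; positivity
  have hDlow : ∀ m : ℕ, (d^2*ν^2*uF d s ν (0,0)) *
      (∑ i ∈ Finset.Icc (N:ℤ) (m:ℤ), c₂/((i:ℝ)+1)) ≤
      (∑ i ∈ Icc (-(m : ℤ)) m, ∑ k ∈ Icc (-(m : ℤ)) m,
          Complex.normSq (steer d s ν i k)) *
        (∑ i ∈ Icc (-(m : ℤ)) m, ∑ k ∈ Icc (-(m : ℤ)) m,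
          Complex.normSq (daz d s ν i k)) -
        Complex.normSq (∑ i ∈ Icc (-(m : ℤ)) m, ∑ k ∈ Icc (-(m : ℤ)) m,
          (starRingEnd ℂ) (daz d s ν i k) * steer d s ν i k) := by
    intro m
    rw [sum_steer_eq d s ν m, sum_daz_eq d s ν m, sum_conj_eq d s ν m]
    have hu : ∀ p ∈ TTset m, 0 ≤ uF d s ν p := fun p _ => Complex.normSq_nonneg _
    have hCS := cs_finset (TTset m) (uF d s ν) (fun p => (vF d s p)^2) hu
    have h00 : ((0:ℤ),(0:ℤ)) ∈ TTset m := by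
      simp only [TTset, Finset.mem_product, Finset.mem_Icc]
      omega
    have hgap := gap_ge (TTset m) (uF d s ν) (vF d s) hu (0,0) h00
    have hv0 : vF d s (0,0) = 1/d := by
      have h : vF d s (0,0) = 1/rUPA d s 0 0 := rfl
      rw [h, rUPA_zero d s hd]
    rw [hv0] at hgap
    have hGlow := G_lower d s ν hd hs hν N hNs m
    have hgap2 : uF d s ν (0,0) * (∑ i ∈ Finset.Icc (N:ℤ) (m:ℤ), c₂/((i:ℝ)+1)) ≤
        (∑ p ∈ TTset m, uF d s ν p) * (∑ p ∈ TTset m, uF d s ν p * (vF d s p)^2)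
          - (∑ p ∈ TTset m, uF d s ν p * vF d s p)^2 :=
      le_trans (mul_le_mul_of_nonneg_left hGlow hu0.le) hgap
    have hterm1 : (0:ℝ) ≤ d^2 * ((∑ p ∈ TTset m, uF d s ν p) *
        (∑ p ∈ TTset m, uF d s ν p * ((vF d s p)^2)^2)
          - (∑ p ∈ TTset m, uF d s ν p * (vF d s p)^2)^2) := by
      have := hCS
      nlinarith [sq_nonneg d]
    have hterm2 := mul_le_mul_of_nonneg_left hgap2 (by positivity : (0:ℝ) ≤ d^2*ν^2)
    nlinarith [hterm1, hterm2]
  have hlowT : Tendsto (fun m : ℕ => (d^2*ν^2*uF d s ν (0,0)) *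
      (∑ i ∈ Finset.Icc (N:ℤ) (m:ℤ), c₂/((i:ℝ)+1))) atTop atTop :=
    (harm_tendsto c₂ hc2pos N).const_mul_atTop (by positivity)
  have hpart2 : Tendsto (fun m : ℕ =>
      (∑ i ∈ Icc (-(m : ℤ)) m, ∑ k ∈ Icc (-(m : ℤ)) m,
          Complex.normSq (steer d s ν i k)) *
        (∑ i ∈ Icc (-(m : ℤ)) m, ∑ k ∈ Icc (-(m : ℤ)) m,
          Complex.normSq (daz d s ν i k)) -
        Complex.normSq (∑ i ∈ Icc (-(m : ℤ)) m, ∑ k ∈ Icc (-(m : ℤ)) m,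
          (starRingEnd ℂ) (daz d s ν i k) * steer d s ν i k)) atTop atTop :=
    tendsto_atTop_mono hDlow hlowT
  refine ⟨?_, hpart2⟩
  have hinv := hpart2.inv_tendsto_atTop
  have hfin := hinv.const_mul (σ^2/(4*Complex.normSq b * (L:ℝ)))
  rw [mul_zero] at hfin
  refine hfin.congr fun m => ?_
  rw [one_div]
  rfl
end
end
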